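/- There exists an absolute constant c > 0 with the following property. Let (a_ℓ)_{ℓ≥1} be a sequence of positive integers with continued fraction denominators (q_ℓ), and let r ≥ 3 and s ≥ 1 be integers with a_{r+s} ≠ a_r. Then |(q_{r−1} q_{r+s})/(q_r q_{r+s−1}) − 1| ≥ c/(a_r · q_{r−1}). -/
import Mathlib


open Filter Topology

/-- Denominators of the convergents of the continued fraction `[0; a 0, a 1, ...]`,
where `a i` denotes the `(i+1)`-st partial quotient `a_{i+1}` of the paper:
`q_0 = 1`, `q_1 = a_1`, `q_{ℓ+1} = a_{ℓ+1} q_ℓ + q_{ℓ-1}`. -/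
def cfQ (a : ℕ → ℕ) : ℕ → ℕ
  | 0 => 1
  | 1 => a 0
  | n + 2 => a (n + 1) * cfQ a (n + 1) + cfQ a n

lemma cfQ_pos (a : ℕ → ℕ) (ha : ∀ i, 0 < a i) : ∀ n, 0 < cfQ a n
  | 0 => one_pos
  | 1 => ha 0
  | n + 2 => by
    have := cfQ_pos a ha n
    simp only [cfQ]
    omega

lemma cfQ_step (a : ℕ → ℕ) (ha : ∀ i, 0 < a i) (n : ℕ) :
    cfQ a (n + 1) + 1 ≤ cfQ a (n + 2) := by
  have h1 := cfQ_pos a ha n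
  have h2 := cfQ_pos a ha (n + 1)
  have h3 := ha (n + 1)
  have : cfQ a (n + 2) = a (n + 1) * cfQ a (n + 1) + cfQ a n := rfl
  nlinarith

lemma keyZ (A B Q0 Q1 Q3 Q3' : ℤ) (hA : 1 ≤ A) (hB : 1 ≤ B) (h0 : 1 ≤ Q0)
    (h1 : Q0 + 1 ≤ Q1) (h3' : 1 ≤ Q3') (h3 : Q3' + 1 ≤ Q3) (hne : B ≠ A) :
    Q3 ≤ |Q1 * (B * Q3 + Q3') - (A * Q1 + Q0) * Q3| := by
  have hQ1 : (0:ℤ) ≤ Q1 := by linarith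
  have hQ3 : (0:ℤ) ≤ Q3 := by linarith
  rcases lt_or_gt_of_ne hne with h | h
  · -- B < A : the difference is negative
    refine le_abs.mpr (Or.inr ?_)
    have e1 : (0:ℤ) ≤ (A - B - 1) * (Q1 * Q3) :=
      mul_nonneg (by linarith) (mul_nonneg hQ1 hQ3)
    have e2 : Q1 * 1 ≤ Q1 * (Q3 - Q3') := by
      apply mul_le_mul_of_nonneg_left (by linarith) hQ1
    have e3 : 1 * Q3 ≤ Q0 * Q3 := by
      apply mul_le_mul_of_nonneg_right h0 hQ3
    nlinarith
  · -- A < B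
    refine le_abs.mpr (Or.inl ?_)
    have e1 : (0:ℤ) ≤ (B - A - 1) * (Q1 * Q3) :=
      mul_nonneg (by linarith) (mul_nonneg hQ1 hQ3)
    have e2 : (0:ℤ) ≤ (Q1 - Q0 - 1) * Q3 := mul_nonneg (by linarith) hQ3
    have e3 : (0:ℤ) ≤ Q1 * Q3' := by nlinarith
    nlinarith

/-- Estimate from the end of the proof of Theorem 2: there is an absolute
constant `c > 0` such that, for any sequence `(a_ℓ)_{ℓ≥1}` of positive integers
(here `a i` encodes `a_{i+1}`) with continued fraction denominators `(q_ℓ)`,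
and any integers `r ≥ 3`, `s ≥ 1` with `a_{r+s} ≠ a_r`, one has
`|(q_{r−1} q_{r+s})/(q_r q_{r+s−1}) − 1| ≥ c/(a_r · q_{r−1})`. -/
theorem statement17 :
    ∃ c : ℝ, 0 < c ∧ ∀ a : ℕ → ℕ, (∀ i, 0 < a i) → ∀ r s : ℕ, 3 ≤ r → 1 ≤ s →
      a (r + s - 1) ≠ a (r - 1) →
      c / ((a (r - 1) : ℝ) * (cfQ a (r - 1) : ℝ)) ≤
        |((cfQ a (r - 1) : ℝ) * (cfQ a (r + s) : ℝ)) /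
          ((cfQ a r : ℝ) * (cfQ a (r + s - 1) : ℝ)) - 1| := by
  refine ⟨1 / 2, by norm_num, ?_⟩
  intro a ha r s hr hs hne
  obtain ⟨m, rfl⟩ : ∃ m, r = m + 3 := ⟨r - 3, by omega⟩
  obtain ⟨t, rfl⟩ : ∃ t, s = t + 1 := ⟨s - 1, by omega⟩
  have er1 : m + 3 - 1 = m + 2 := by omega
  have ers1 : m + 3 + (t + 1) - 1 = m + t + 3 := by omega
  have ers : m + 3 + (t + 1) = m + t + 4 := by omega
  rw [ers1] at hne
  rw [er1] at hne ⊢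
  rw [ers1, ers]
  have hQ2 : cfQ a (m + 3) = a (m + 2) * cfQ a (m + 2) + cfQ a (m + 1) := rfl
  have hQ4 : cfQ a (m + t + 4) =
      a (m + t + 3) * cfQ a (m + t + 3) + cfQ a (m + t + 2) := rfl
  have hApos : 0 < a (m + 2) := ha _
  have hBpos : 0 < a (m + t + 3) := ha _
  have hQ0 := cfQ_pos a ha (m + 1)
  have hQ1 := cfQ_pos a ha (m + 2)
  have hQ2p := cfQ_pos a ha (m + 3)
  have hQ3p := cfQ_pos a ha (m + t + 3)
  have hQ3'p := cfQ_pos a ha (m + t + 2)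
  have hs1 : cfQ a (m + 1) + 1 ≤ cfQ a (m + 2) := cfQ_step a ha m
  have hs2 : cfQ a (m + t + 2) + 1 ≤ cfQ a (m + t + 3) := cfQ_step a ha (m + t + 1)
  -- key integer inequality
  have key : (cfQ a (m + t + 3) : ℤ) ≤
      |(cfQ a (m + 2) : ℤ) * (cfQ a (m + t + 4) : ℤ) -
        (cfQ a (m + 3) : ℤ) * (cfQ a (m + t + 3) : ℤ)| := by
    have := keyZ (a (m + 2)) (a (m + t + 3)) (cfQ a (m + 1)) (cfQ a (m + 2))
      (cfQ a (m + t + 3)) (cfQ a (m + t + 2))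
      (by exact_mod_cast hApos) (by exact_mod_cast hBpos)
      (by exact_mod_cast hQ0) (by exact_mod_cast hs1)
      (by exact_mod_cast hQ3'p) (by exact_mod_cast hs2)
      (by exact_mod_cast hne)
    rw [hQ2, hQ4]
    push_cast
    convert this using 2

  -- pass to the reals
  have keyR : (cfQ a (m + t + 3) : ℝ) ≤
      |(cfQ a (m + 2) : ℝ) * (cfQ a (m + t + 4) : ℝ) -
        (cfQ a (m + 3) : ℝ) * (cfQ a (m + t + 3) : ℝ)| := by
    exact_mod_cast key
  have hQ1r : (0:ℝ) < (cfQ a (m + 2) : ℝ) := by exact_mod_cast hQ1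
  have hQ2r : (0:ℝ) < (cfQ a (m + 3) : ℝ) := by exact_mod_cast hQ2p
  have hQ3r : (0:ℝ) < (cfQ a (m + t + 3) : ℝ) := by exact_mod_cast hQ3p
  have hAr : (0:ℝ) < (a (m + 2) : ℝ) := by exact_mod_cast hApos
  have hrw : (cfQ a (m + 2) : ℝ) * (cfQ a (m + t + 4) : ℝ) /
        ((cfQ a (m + 3) : ℝ) * (cfQ a (m + t + 3) : ℝ)) - 1 =
      ((cfQ a (m + 2) : ℝ) * (cfQ a (m + t + 4) : ℝ) -
        (cfQ a (m + 3) : ℝ) * (cfQ a (m + t + 3) : ℝ)) /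
        ((cfQ a (m + 3) : ℝ) * (cfQ a (m + t + 3) : ℝ)) := by
    field_simp
  rw [hrw, abs_div, abs_of_pos (by positivity : (0:ℝ) <
    (cfQ a (m + 3) : ℝ) * (cfQ a (m + t + 3) : ℝ))]
  have step1 : 1 / (cfQ a (m + 3) : ℝ) ≤
      |(cfQ a (m + 2) : ℝ) * (cfQ a (m + t + 4) : ℝ) -
        (cfQ a (m + 3) : ℝ) * (cfQ a (m + t + 3) : ℝ)| /
        ((cfQ a (m + 3) : ℝ) * (cfQ a (m + t + 3) : ℝ)) := by
    rw [div_le_div_iff₀ hQ2r (by positivity)]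
    nlinarith [mul_le_mul_of_nonneg_right keyR (le_of_lt hQ2r)]
  refine le_trans ?_ step1
  rw [div_le_div_iff₀ (by positivity) hQ2r]
  have hQ2eq : (cfQ a (m + 3) : ℝ) =
      (a (m + 2) : ℝ) * (cfQ a (m + 2) : ℝ) + (cfQ a (m + 1) : ℝ) := by
    rw [hQ2]; push_cast; ring
  have hQ0le : (cfQ a (m + 1) : ℝ) ≤ (cfQ a (m + 2) : ℝ) := by
    have : cfQ a (m + 1) ≤ cfQ a (m + 2) := by omega
    exact_mod_cast this
  have hA1 : (1 : ℝ) ≤ (a (m + 2) : ℝ) := by exact_mod_cast hApos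
  nlinarith
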